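/- Theorem 1(2), necessity direction (MPQP): Let H be a real symmetric positive definite n×n matrix, A a real m×n matrix, E a real m×p matrix, b ∈ ℝᵐ, θ ∈ ℝᵖ. Let I ⊆ {1,…,m} be an index set, let Ã, Ẽ, b̃ denote the submatrices/subvector of A, E, b formed by the rows in I, and Ā, Ē, b̄ those formed by the rows in the complement of I; assume the rows of Ã are linearly independent. Suppose x ∈ ℝⁿ and y ∈ ℝᵐ satisfy H x + Aᵀ y = 0, y ≥ 0, yᵢ = 0 for every i ∉ I, à x = b̃ + Ẽ θ, and Ā x < b̄ + Ē θ. Then θ ∈ 𝒫_p ∩ 𝒫_d, where 𝒫_p = {θ : Ā H⁻¹ Ãᵀ (à H⁻¹ Ãᵀ)⁻¹ (b̃ + Ẽ θ) − b̄ − Ē θ < 0} and 𝒫_d = {θ : (à H⁻¹ Ãᵀ)⁻¹ (b̃ + Ẽ θ) ≤ 0}. -/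

import Mathlib

/-!
Stationarity together with `yᵢ = 0` off `I` reads `H x = -Ãᵀ ỹ` with `ỹ = y|_I ≥ 0`, so
`x = -H⁻¹ Ãᵀ ỹ`. Substituting into the active constraints gives `(à H⁻¹ Ãᵀ) ỹ = -(b̃ + Ẽ θ)`,
whence `(à H⁻¹ Ãᵀ)⁻¹ (b̃ + Ẽ θ) = -ỹ ≤ 0`, and `Ā H⁻¹ Ãᵀ (à H⁻¹ Ãᵀ)⁻¹ (b̃ + Ẽ θ) = Ā x`,
which is `< b̄ + Ē θ` by strict feasibility of the inactive constraints. Both inverses exist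
because `H`, `H⁻¹` and `à H⁻¹ Ãᵀ` have positive quadratic forms.
-/

open Matrix

namespace Matrix

variable {ι κ μ ν R : Type*}

theorem transpose_mulVec_eq_of_support_subset_range [CommSemiring R] [Fintype κ] [Fintype μ]
    (A : Matrix μ ι R) {σ : κ → μ} (hσ : Function.Injective σ) {y : μ → R}
    (hy : ∀ i ∉ Set.range σ, y i = 0) :
    Aᵀ *ᵥ y = (A.submatrix σ id)ᵀ *ᵥ (y ∘ σ) := by
  ext j
  simp only [mulVec, dotProduct, transpose_apply, submatrix_apply, id, Function.comp_apply]
  exact (Fintype.sum_of_injective σ hσ _ _ (fun i hi => by rw [hy i hi, mul_zero])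
    fun _ => rfl).symm

variable [Fintype ι] [Fintype κ]

section CommRing

variable [CommRing R]

theorem dotProduct_mul_mul_transpose_mulVec_pos [PartialOrder R] {M : Matrix ι ι R}
    {B : Matrix κ ι R} (hM : ∀ v : ι → R, v ≠ 0 → 0 < v ⬝ᵥ M *ᵥ v)
    (hB : LinearIndependent R B.row) {v : κ → R} (hv : v ≠ 0) :
    0 < v ⬝ᵥ (B * M * Bᵀ) *ᵥ v := by
  have hBv : Bᵀ *ᵥ v ≠ 0 := by
    rw [mulVec_transpose]
    exact fun h => hv (vecMul_injective_iff.mpr hB (h.trans (zero_vecMul B).symm))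
  calc 0 < Bᵀ *ᵥ v ⬝ᵥ M *ᵥ (Bᵀ *ᵥ v) := hM _ hBv
    _ = v ⬝ᵥ (B * M * Bᵀ) *ᵥ v := by
      rw [← mulVec_mulVec, ← mulVec_mulVec, dotProduct_mulVec v B, mulVec_transpose]

variable [DecidableEq ι]

theorem inv_mulVec_mulVec_cancel {M : Matrix ι ι R} (hM : IsUnit M) (v : ι → R) :
    M⁻¹ *ᵥ (M *ᵥ v) = v := by
  rw [mulVec_mulVec, nonsing_inv_mul M ((isUnit_iff_isUnit_det M).mp hM), one_mulVec]

theorem mulVec_inv_mulVec_cancel {M : Matrix ι ι R} (hM : IsUnit M) (v : ι → R) :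
    M *ᵥ (M⁻¹ *ᵥ v) = v := by
  rw [mulVec_mulVec, mul_nonsing_inv M ((isUnit_iff_isUnit_det M).mp hM), one_mulVec]

section Stationarity

variable {H : Matrix ι ι R} {B : Matrix κ ι R} {x : ι → R} {z : κ → R}

theorem inv_mulVec_transpose_mulVec_eq_neg (hH : IsUnit H) (hstat : H *ᵥ x + Bᵀ *ᵥ z = 0) :
    H⁻¹ *ᵥ (Bᵀ *ᵥ z) = -x := by
  rw [eq_neg_of_add_eq_zero_right hstat, mulVec_neg, inv_mulVec_mulVec_cancel hH]

variable [DecidableEq κ]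

theorem inv_mul_inv_mul_transpose_mulVec_eq_neg (hH : IsUnit H) (hM : IsUnit (B * H⁻¹ * Bᵀ))
    (hstat : H *ᵥ x + Bᵀ *ᵥ z = 0) : (B * H⁻¹ * Bᵀ)⁻¹ *ᵥ (B *ᵥ x) = -z := by
  have hBx : B *ᵥ x = -((B * H⁻¹ * Bᵀ) *ᵥ z) := by
    rw [← mulVec_mulVec, ← mulVec_mulVec, inv_mulVec_transpose_mulVec_eq_neg hH hstat,
      mulVec_neg, neg_neg]
  rw [hBx, mulVec_neg, inv_mulVec_mulVec_cancel hM]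

theorem mul_inv_mul_transpose_mul_inv_mulVec_eq [Fintype ν] (C : Matrix ν ι R) (hH : IsUnit H)
    (hM : IsUnit (B * H⁻¹ * Bᵀ)) (hstat : H *ᵥ x + Bᵀ *ᵥ z = 0) :
    (C * H⁻¹ * Bᵀ * (B * H⁻¹ * Bᵀ)⁻¹) *ᵥ (B *ᵥ x) = C *ᵥ x := by
  rw [← mulVec_mulVec, inv_mul_inv_mul_transpose_mulVec_eq_neg hH hM hstat, ← mulVec_mulVec,
    ← mulVec_mulVec]
  simp only [mulVec_neg, inv_mulVec_transpose_mulVec_eq_neg hH hstat, neg_neg]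

end Stationarity

end CommRing

variable [Field R] [PartialOrder R] [DecidableEq ι]

theorem isUnit_of_dotProduct_mulVec_pos {M : Matrix ι ι R}
    (hM : ∀ v : ι → R, v ≠ 0 → 0 < v ⬝ᵥ M *ᵥ v) : IsUnit M := by
  rw [isUnit_iff_isUnit_det, isUnit_iff_ne_zero, ne_eq, ← exists_mulVec_eq_zero_iff]
  rintro ⟨v, hv, hMv⟩
  simpa [hMv] using hM v hv

theorem dotProduct_inv_mulVec_pos {M : Matrix ι ι R}
    (hM : ∀ v : ι → R, v ≠ 0 → 0 < v ⬝ᵥ M *ᵥ v) {w : ι → R} (hw : w ≠ 0) :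
    0 < w ⬝ᵥ M⁻¹ *ᵥ w := by
  have hMu := isUnit_of_dotProduct_mulVec_pos hM
  set u := M⁻¹ *ᵥ w
  have hwu : w = M *ᵥ u := (mulVec_inv_mulVec_cancel hMu w).symm
  have hu : u ≠ 0 := by rintro hu; exact hw (by rw [hwu, hu, mulVec_zero])
  calc 0 < u ⬝ᵥ M *ᵥ u := hM u hu
    _ = w ⬝ᵥ M⁻¹ *ᵥ w := by rw [hwu, inv_mulVec_mulVec_cancel hMu, dotProduct_comm]

end Matrix

theorem mpqp_necessity_general {m n p k : ℕ}
    (H : Matrix (Fin n) (Fin n) ℝ)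
    (hHpd : ∀ v : Fin n → ℝ, v ≠ 0 → 0 < v ⬝ᵥ H.mulVec v)
    (A : Matrix (Fin m) (Fin n) ℝ)
    (θ : Fin p → ℝ)
    (σ : Fin k → Fin m)
    (At : Matrix (Fin k) (Fin n) ℝ) (Et : Matrix (Fin k) (Fin p) ℝ) (bt : Fin k → ℝ)
    (Ab : Matrix {i : Fin m // i ∉ Set.range σ} (Fin n) ℝ)
    (Eb : Matrix {i : Fin m // i ∉ Set.range σ} (Fin p) ℝ)
    (bb : {i : Fin m // i ∉ Set.range σ} → ℝ)
    (hAt : At = A.submatrix σ id)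
    (hrows : LinearIndependent ℝ (fun i : Fin k => At i))
    (x : Fin n → ℝ) (y : Fin m → ℝ)
    (hstat : H.mulVec x + Aᵀ.mulVec y = 0)
    (hy : 0 ≤ y)
    (hsupp : ∀ i : Fin m, i ∉ Set.range σ → y i = 0)
    (hactive : At.mulVec x = bt + Et.mulVec θ)
    (hinactive : ∀ i : {i : Fin m // i ∉ Set.range σ},
      Ab.mulVec x i < (bb + Eb.mulVec θ) i) :
    (∀ i : {i : Fin m // i ∉ Set.range σ},
      (Ab * H⁻¹ * Atᵀ * (At * H⁻¹ * Atᵀ)⁻¹).mulVec (bt + Et.mulVec θ) i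
        - (bb + Eb.mulVec θ) i < 0) ∧
    (At * H⁻¹ * Atᵀ)⁻¹.mulVec (bt + Et.mulVec θ) ≤ 0 := by
  have hσ : Function.Injective σ := by
    subst hAt
    exact Function.Injective.of_comp (f := A) hrows.injective
  have hstat' : H *ᵥ x + Atᵀ *ᵥ (y ∘ σ) = 0 := by
    rwa [hAt, ← transpose_mulVec_eq_of_support_subset_range A hσ hsupp]
  have hH : IsUnit H := isUnit_of_dotProduct_mulVec_pos hHpd
  have hM : IsUnit (At * H⁻¹ * Atᵀ) := isUnit_of_dotProduct_mulVec_pos fun _ hv =>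
    dotProduct_mul_mul_transpose_mulVec_pos (fun _ hw => dotProduct_inv_mulVec_pos hHpd hw) hrows hv
  rw [← hactive]
  refine ⟨fun i => ?_, ?_⟩
  · rw [mul_inv_mul_transpose_mul_inv_mulVec_eq Ab hH hM hstat', sub_neg]
    exact hinactive i
  · rw [inv_mul_inv_mul_transpose_mulVec_eq_neg hH hM hstat']
    exact fun i => neg_nonpos.mpr (hy (σ i))

/-- Theorem 1(2) of the paper, necessity direction (MPQP).  The active index
set is `I = Set.range σ`; `At, Et, bt` are the rows of `A, E, b` in `I`
(assumed linearly independent) and `Ab, Eb, bb` the rows in its complement.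
If `(x, y)` satisfies the KKT conditions with active set exactly `I`, then
`θ` lies in the critical region `𝒫_p ∩ 𝒫_d`. -/
theorem mpqp_necessity {m n p k : ℕ}
    (H : Matrix (Fin n) (Fin n) ℝ)
    (hHsym : Hᵀ = H)
    (hHpd : ∀ v : Fin n → ℝ, v ≠ 0 → 0 < v ⬝ᵥ H.mulVec v)
    (A : Matrix (Fin m) (Fin n) ℝ) (E : Matrix (Fin m) (Fin p) ℝ) (b : Fin m → ℝ)
    (θ : Fin p → ℝ)
    (σ : Fin k → Fin m) (hσ : Function.Injective σ)
    (At : Matrix (Fin k) (Fin n) ℝ) (Et : Matrix (Fin k) (Fin p) ℝ) (bt : Fin k → ℝ)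
    (Ab : Matrix {i : Fin m // i ∉ Set.range σ} (Fin n) ℝ)
    (Eb : Matrix {i : Fin m // i ∉ Set.range σ} (Fin p) ℝ)
    (bb : {i : Fin m // i ∉ Set.range σ} → ℝ)
    (hAt : At = A.submatrix σ id) (hEt : Et = E.submatrix σ id) (hbt : bt = b ∘ σ)
    (hAb : Ab = A.submatrix Subtype.val id) (hEb : Eb = E.submatrix Subtype.val id)
    (hbb : bb = b ∘ Subtype.val)
    (hrows : LinearIndependent ℝ (fun i : Fin k => At i))
    (x : Fin n → ℝ) (y : Fin m → ℝ)
    (hstat : H.mulVec x + Aᵀ.mulVec y = 0)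
    (hy : 0 ≤ y)
    (hsupp : ∀ i : Fin m, i ∉ Set.range σ → y i = 0)
    (hactive : At.mulVec x = bt + Et.mulVec θ)
    (hinactive : ∀ i : {i : Fin m // i ∉ Set.range σ},
      Ab.mulVec x i < (bb + Eb.mulVec θ) i) :
    (∀ i : {i : Fin m // i ∉ Set.range σ},
      (Ab * H⁻¹ * Atᵀ * (At * H⁻¹ * Atᵀ)⁻¹).mulVec (bt + Et.mulVec θ) i
        - (bb + Eb.mulVec θ) i < 0) ∧
    (At * H⁻¹ * Atᵀ)⁻¹.mulVec (bt + Et.mulVec θ) ≤ 0 :=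
  mpqp_necessity_general H hHpd A θ σ At Et bt Ab Eb bb hAt hrows x y hstat hy hsupp hactive
    hinactive
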